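/- Let u ⊆ {1,…,d} and let x, y, z be independent random vectors, each uniformly distributed on [0,1]^d. Then E[ (f(x) − f(z_u : x_{-u})) · (f(x_u : y_{-u}) − f(y)) ] = τ̲²_u. (This is the defining identity of the 'Correlation 2' estimator, which uses three independent input vectors.) -/

import Mathlib

open MeasureTheory Finset

/-- The uniform (Lebesgue) probability measure on the interval `[0,1]`. -/
noncomputable def unifSeg : Measure ℝ := (volume : Measure ℝ).restrict (Set.Icc 0 1)

/-- The uniform (Lebesgue) product probability measure on the cube `[0,1]^d`. -/
noncomputable def unifCube (d : ℕ) : Measure (Fin d → ℝ) :=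
  Measure.pi fun _ => unifSeg

/-- `glue u x y` is the point whose `j`-th coordinate is `x j` for `j ∈ u`
and `y j` otherwise, i.e. `(x_u : y_{-u})`. -/
def glue {d : ℕ} (u : Finset (Fin d)) (x y : Fin d → ℝ) : Fin d → ℝ :=
  fun j => if j ∈ u then x j else y j

/-- The lower Sobol' index `τ̲²_u` of the set `u`. -/
noncomputable def lowerSobol {d : ℕ} (f : (Fin d → ℝ) → ℝ) (u : Finset (Fin d)) : ℝ :=
  (∫ x, (∫ y, f (glue u x y) ∂(unifCube d)) ^ 2 ∂(unifCube d))
    - (∫ x, f x ∂(unifCube d)) ^ 2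

/-- The variance `σ²` of `f` over the unit cube. -/
noncomputable def sigmaSq {d : ℕ} (f : (Fin d → ℝ) → ℝ) : ℝ :=
  (∫ x, f x ^ 2 ∂(unifCube d)) - (∫ x, f x ∂(unifCube d)) ^ 2

/-- The upper Sobol' index `τ̄²_u = σ² - τ̲²_{uᶜ}` of the set `u`. -/
noncomputable def upperSobol {d : ℕ} (f : (Fin d → ℝ) → ℝ) (u : Finset (Fin d)) : ℝ :=
  sigmaSq f - lowerSobol f uᶜ

/-!
Expand the product into four terms. In three of them the two evaluation points,
`(x, y)`, `((z_u : x_{-u}), y)` and `((z_u : x_{-u}), (x_u : y_{-u}))`, read disjoint sets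
of coordinates of the independent vectors `x, y, z`, so they are independent uniform points
and each term equals `(∫ f)²`. In the remaining term `E[f(x) f(x_u : y_{-u})]` write
`x = (a_u : b_{-u})`; then `(x_u : y_{-u}) = (a_u : y_{-u})` and the term becomes
`∫ (∫ f(a_u : b_{-u}) db)² da = τ̲²_u + (∫ f)²`. All the independence statements follow from
one fact: the coordinatewise exchange `(x, y) ↦ ((x_u : y_{-u}), (y_u : x_{-u}))` preserves
the product measure.
-/

instance : IsProbabilityMeasure unifSeg :=
  ⟨by simp [unifSeg, Real.volume_Icc]⟩

section Prod

variable {α β γ : Type*} [MeasurableSpace α] [MeasurableSpace β] [MeasurableSpace γ]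

lemma MeasureTheory.MeasurePreserving.integral_comp_of_aestronglyMeasurable
    {μ : Measure α} {ν : Measure β} {T : α → β} (hT : MeasurePreserving T μ ν)
    {g : β → ℝ} (hg : AEStronglyMeasurable g ν) :
    ∫ a, g (T a) ∂μ = ∫ b, g b ∂ν := by
  rw [← hT.map_eq] at hg ⊢
  exact (integral_map hT.aemeasurable hg).symm

lemma MeasureTheory.MeasurePreserving.integral_comp_fst_mul_comp_snd {μ : Measure α} {ν : Measure β}
    {ρ : Measure γ} [SFinite ν] [SFinite ρ] {T : α → β × γ}
    (hT : MeasurePreserving T μ (ν.prod ρ)) {f : β → ℝ} {g : γ → ℝ}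
    (hf : AEStronglyMeasurable f ν) (hg : AEStronglyMeasurable g ρ) :
    ∫ a, f (T a).1 * g (T a).2 ∂μ = (∫ b, f b ∂ν) * ∫ c, g c ∂ρ := by
  rw [← integral_prod_mul]
  exact hT.integral_comp_of_aestronglyMeasurable (g := fun q => f q.1 * g q.2)
    (hf.comp_fst.mul hg.comp_snd)

lemma measurePreserving_prod_rotate (μ : Measure α) (ν : Measure β) (ρ : Measure γ)
    [SFinite μ] [SFinite ν] [SFinite ρ] :
    MeasurePreserving (fun p : (α × β) × γ => ((p.2, p.1.1), p.1.2))
      ((μ.prod ν).prod ρ) ((ρ.prod μ).prod ν) :=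
  ((measurePreserving_prodAssoc ρ μ ν).symm MeasurableEquiv.prodAssoc).comp
    Measure.measurePreserving_swap

lemma integral_integral_integral {μ : Measure α} {ν : Measure β} {ρ : Measure γ}
    [SFinite μ] [SFinite ν] [SFinite ρ] {f : α → β → γ → ℝ}
    (hf : Integrable (fun p : (α × β) × γ => f p.1.1 p.1.2 p.2) ((μ.prod ν).prod ρ)) :
    ∫ x, ∫ y, ∫ z, f x y z ∂ρ ∂ν ∂μ = ∫ p, f p.1.1 p.1.2 p.2 ∂((μ.prod ν).prod ρ) := by
  rw [integral_prod _ hf, integral_prod _ hf.integral_prod_left]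

end Prod

lemma integral_sub_mul_sub {α : Type*} [MeasurableSpace α] {μ : Measure α} {a b c e : α → ℝ}
    (ha : MemLp a 2 μ) (hb : MemLp b 2 μ) (hc : MemLp c 2 μ) (he : MemLp e 2 μ) :
    ∫ x, (a x - b x) * (c x - e x) ∂μ =
      ∫ x, a x * c x ∂μ - ∫ x, a x * e x ∂μ - ∫ x, b x * c x ∂μ + ∫ x, b x * e x ∂μ := by
  have hac : Integrable (fun x => a x * c x) μ := ha.integrable_mul hc
  have hae : Integrable (fun x => a x * e x) μ := ha.integrable_mul he
  have hbc : Integrable (fun x => b x * c x) μ := hb.integrable_mul hc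
  have hbe : Integrable (fun x => b x * e x) μ := hb.integrable_mul he
  have hace : Integrable (fun x => a x * c x - a x * e x) μ := hac.sub hae
  have hbce : Integrable (fun x => b x * c x - b x * e x) μ := hbc.sub hbe
  simp_rw [sub_mul, mul_sub]
  rw [integral_sub hace hbce, integral_sub hac hae, integral_sub hbc hbe]
  ring

section Glue

variable {d : ℕ} (u : Finset (Fin d))

@[simp]
lemma glue_glue_left (x y z : Fin d → ℝ) : glue u (glue u x y) z = glue u x z := by
  funext j
  by_cases h : j ∈ u <;> simp [glue, h]

variable (μ : Fin d → Measure ℝ)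

lemma measurePreserving_glue_swap [∀ i, SigmaFinite (μ i)] :
    MeasurePreserving (fun p : (Fin d → ℝ) × (Fin d → ℝ) => (glue u p.1 p.2, glue u p.2 p.1))
      ((Measure.pi μ).prod (Measure.pi μ)) ((Measure.pi μ).prod (Measure.pi μ)) := by
  classical
  have hE := measurePreserving_arrowProdEquivProdArrow ℝ ℝ (Fin d) μ μ
  have hswap (i : Fin d) : MeasurePreserving (fun q : ℝ × ℝ => if i ∈ u then q else q.swap)
      ((μ i).prod (μ i)) ((μ i).prod (μ i)) := by
    split_ifs
    · exact MeasurePreserving.id _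
    · exact Measure.measurePreserving_swap
  convert (hE.comp (measurePreserving_pi _ _ hswap)).comp (hE.symm _) using 1
  funext p
  ext j <;> by_cases h : j ∈ u <;> simp [glue, h, MeasurableEquiv.arrowProdEquivProdArrow]

variable [∀ i, IsProbabilityMeasure (μ i)]

lemma measurePreserving_glue :
    MeasurePreserving (fun p : (Fin d → ℝ) × (Fin d → ℝ) => glue u p.1 p.2)
      ((Measure.pi μ).prod (Measure.pi μ)) (Measure.pi μ) :=
  measurePreserving_fst.comp (measurePreserving_glue_swap u μ)

lemma measurePreserving_glue_rotate :
    MeasurePreserving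
      (fun p : ((Fin d → ℝ) × (Fin d → ℝ)) × (Fin d → ℝ) => (glue u p.2 p.1.1, p.1.2))
      (((Measure.pi μ).prod (Measure.pi μ)).prod (Measure.pi μ))
      ((Measure.pi μ).prod (Measure.pi μ)) :=
  ((measurePreserving_glue u μ).prod (MeasurePreserving.id _)).comp
    (measurePreserving_prod_rotate _ _ _)

lemma measurePreserving_glue_glue :
    MeasurePreserving
      (fun p : ((Fin d → ℝ) × (Fin d → ℝ)) × (Fin d → ℝ) =>
        (glue u p.2 p.1.1, glue u p.1.1 p.1.2))
      (((Measure.pi μ).prod (Measure.pi μ)).prod (Measure.pi μ))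
      ((Measure.pi μ).prod (Measure.pi μ)) := by
  have h := (((MeasurePreserving.id _).prod (measurePreserving_glue u μ)).comp
    (measurePreserving_prodAssoc _ _ _)).comp
    (((measurePreserving_glue_swap u μ).prod (MeasurePreserving.id _)).comp
      (measurePreserving_prod_rotate _ _ _))
  convert h using 1
  funext p
  exact Prod.ext rfl (glue_glue_left u _ _ _).symm

lemma integral_mul_glue {f : (Fin d → ℝ) → ℝ} (hf : MemLp f 2 (Measure.pi μ)) :
    ∫ q, f q.1 * f (glue u q.1 q.2) ∂((Measure.pi μ).prod (Measure.pi μ)) =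
      ∫ x, (∫ y, f (glue u x y) ∂(Measure.pi μ)) ^ 2 ∂(Measure.pi μ) := by
  set π := Measure.pi μ
  have hT : MeasurePreserving
      (fun r : (Fin d → ℝ) × (Fin d → ℝ) × (Fin d → ℝ) => (glue u r.1 r.2.1, r.2.2))
      (π.prod (π.prod π)) (π.prod π) :=
    ((measurePreserving_glue u μ).prod (MeasurePreserving.id π)).comp
      ((measurePreserving_prodAssoc π π π).symm MeasurableEquiv.prodAssoc)
  have hG₁ : MeasurePreserving
      (fun r : (Fin d → ℝ) × (Fin d → ℝ) × (Fin d → ℝ) => glue u r.1 r.2.1)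
      (π.prod (π.prod π)) π :=
    measurePreserving_fst.comp hT
  have hG₂ : MeasurePreserving
      (fun r : (Fin d → ℝ) × (Fin d → ℝ) × (Fin d → ℝ) => glue u r.1 r.2.2)
      (π.prod (π.prod π)) π :=
    (measurePreserving_glue u μ).comp ((MeasurePreserving.id π).prod measurePreserving_snd)
  have hF : AEStronglyMeasurable (fun q : (Fin d → ℝ) × (Fin d → ℝ) => f q.1 * f (glue u q.1 q.2))
      (π.prod π) :=
    hf.1.comp_fst.mul (hf.1.comp_measurePreserving (measurePreserving_glue u μ))
  calc ∫ q, f q.1 * f (glue u q.1 q.2) ∂(π.prod π)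
      = ∫ r, f (glue u r.1 r.2.1) * f (glue u r.1 r.2.2) ∂(π.prod (π.prod π)) := by
        rw [← hT.integral_comp_of_aestronglyMeasurable hF]
        simp only [glue_glue_left]
    _ = ∫ x, ∫ q, f (glue u x q.1) * f (glue u x q.2) ∂(π.prod π) ∂π :=
        integral_prod _
          ((hf.comp_measurePreserving hG₁).integrable_mul (hf.comp_measurePreserving hG₂))
    _ = ∫ x, (∫ y, f (glue u x y) ∂π) ^ 2 ∂π := by
        congr 1 with x
        rw [sq]
        exact integral_prod_mul (fun y => f (glue u x y)) (fun y => f (glue u x y))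

theorem integral_glue_correlation {f : (Fin d → ℝ) → ℝ} (hf : MemLp f 2 (Measure.pi μ)) :
    ∫ x, ∫ y, ∫ z, (f x - f (glue u z x)) * (f (glue u x y) - f y)
        ∂(Measure.pi μ) ∂(Measure.pi μ) ∂(Measure.pi μ) =
      ∫ x, (∫ y, f (glue u x y) ∂(Measure.pi μ)) ^ 2 ∂(Measure.pi μ)
        - (∫ x, f x ∂(Measure.pi μ)) ^ 2 := by
  set π := Measure.pi μ
  have hfst : MeasurePreserving (Prod.fst : ((Fin d → ℝ) × (Fin d → ℝ)) × (Fin d → ℝ) → _)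
      ((π.prod π).prod π) (π.prod π) :=
    measurePreserving_fst
  have hfX : MemLp (fun p : ((Fin d → ℝ) × (Fin d → ℝ)) × (Fin d → ℝ) => f p.1.1) 2
      ((π.prod π).prod π) :=
    hf.comp_measurePreserving (measurePreserving_fst.comp hfst)
  have hfZX : MemLp (fun p : ((Fin d → ℝ) × (Fin d → ℝ)) × (Fin d → ℝ) => f (glue u p.2 p.1.1)) 2
      ((π.prod π).prod π) :=
    hf.comp_measurePreserving (measurePreserving_fst.comp (measurePreserving_glue_rotate u μ))
  have hfXY : MemLp (fun p : ((Fin d → ℝ) × (Fin d → ℝ)) × (Fin d → ℝ) => f (glue u p.1.1 p.1.2))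
      2 ((π.prod π).prod π) :=
    hf.comp_measurePreserving ((measurePreserving_glue u μ).comp hfst)
  have hfY : MemLp (fun p : ((Fin d → ℝ) × (Fin d → ℝ)) × (Fin d → ℝ) => f p.1.2) 2
      ((π.prod π).prod π) :=
    hf.comp_measurePreserving (measurePreserving_snd.comp hfst)
  have hfm := hf.aestronglyMeasurable
  rw [integral_integral_integral ((hfX.sub hfZX).integrable_mul (hfXY.sub hfY)),
    integral_sub_mul_sub hfX hfZX hfXY hfY,
    hfst.integral_comp_of_aestronglyMeasurable (g := fun q => f q.1 * f (glue u q.1 q.2))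
      (hfm.comp_fst.mul (hfm.comp_measurePreserving (measurePreserving_glue u μ))),
    integral_mul_glue u μ hf,
    hfst.integral_comp_fst_mul_comp_snd hfm hfm,
    (measurePreserving_glue_glue u μ).integral_comp_fst_mul_comp_snd hfm hfm,
    (measurePreserving_glue_rotate u μ).integral_comp_fst_mul_comp_snd hfm hfm]
  ring

end Glue

theorem stmt4_general {d : ℕ} (f : (Fin d → ℝ) → ℝ)
    (hf : MemLp f 2 (unifCube d)) (u : Finset (Fin d)) :
    (∫ x, ∫ y, ∫ z,
        (f x - f (glue u z x)) * (f (glue u x y) - f y)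
        ∂(unifCube d) ∂(unifCube d) ∂(unifCube d))
      = lowerSobol f u :=
  integral_glue_correlation u _ hf

theorem stmt4 {d : ℕ} (hd : 1 ≤ d) (f : (Fin d → ℝ) → ℝ)
    (hf : MemLp f 2 (unifCube d)) (u : Finset (Fin d)) :
    (∫ x, ∫ y, ∫ z,
        (f x - f (glue u z x)) * (f (glue u x y) - f y)
        ∂(unifCube d) ∂(unifCube d) ∂(unifCube d))
      = lowerSobol f u :=
  stmt4_general f hf u
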